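/- Suppose B ⊆ S^n satisfies condition (B) (for all distinct A, B ∈ B, J_0(B) ⊆ J_+(A)) and condition (A-5) (for all distinct A, B ∈ B, J_+(B) ⊄ J_+(A)). Define B_0 = {B ∈ B : ⟨B,X⟩ = 0 for every X ∈ J_+(B)}. Then exactly one of the following holds: (a) there exists B̄ ∈ B_0 and in that case J_+(B) = J_0(B̄); or (b) B_0 = ∅ and then for every distinct A, B ∈ B, J_-(B) is a proper subset of J_+(A). -/

import Mathlib

open Matrix

/-- J_+(C) = {X ∈ S^n_+ : ⟨C,X⟩ ≥ 0}. -/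
def Jp {n : ℕ} (C : Matrix (Fin n) (Fin n) ℝ) : Set (Matrix (Fin n) (Fin n) ℝ) :=
  {X | X.PosSemidef ∧ 0 ≤ (C * X).trace}

/-- J_-(C) = {X ∈ S^n_+ : ⟨C,X⟩ ≤ 0}. -/
def Jm {n : ℕ} (C : Matrix (Fin n) (Fin n) ℝ) : Set (Matrix (Fin n) (Fin n) ℝ) :=
  {X | X.PosSemidef ∧ (C * X).trace ≤ 0}

/-- J_0(C) = {X ∈ S^n_+ : ⟨C,X⟩ = 0}. -/
def J0 {n : ℕ} (C : Matrix (Fin n) (Fin n) ℝ) : Set (Matrix (Fin n) (Fin n) ℝ) :=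
  {X | X.PosSemidef ∧ (C * X).trace = 0}

/-- J_+(𝓑) = ⋂_{B ∈ 𝓑} J_+(B). -/
def JpFam {n : ℕ} (𝓑 : Set (Matrix (Fin n) (Fin n) ℝ)) : Set (Matrix (Fin n) (Fin n) ℝ) :=
  {X | X.PosSemidef ∧ ∀ B ∈ 𝓑, 0 ≤ (B * X).trace}

/-!
If `B₀ ∈ 𝓑` vanishes on `J_+(𝓑)`, condition (B) for the pairs `(B, B₀)` gives
`J_0(B₀) ⊆ J_+(𝓑)`, and the reverse inclusion is the vanishing itself.

Otherwise take distinct `A, B ∈ 𝓑` and `X ∈ J_-(B)` with `⟨A,X⟩ < 0`. By (A-5) there is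
`W ∈ J_+(B)` with `⟨A,W⟩ < 0`, and by (B) both `⟨B,X⟩ < 0 < ⟨B,W⟩`. Sliding from `X`
towards `W` reaches a point `X + cW` (`c > 0`) of `J_0(B)` on which `⟨A,·⟩` is still negative,
contradicting (B). Strictness of `J_-(B) ⊂ J_+(A)` comes from a point of `J_+(𝓑)` on which `B`
does not vanish.
-/

section

variable {n : ℕ}

lemma trace_mul_add_smul (C X W : Matrix (Fin n) (Fin n) ℝ) (c : ℝ) :
    (C * (X + c • W)).trace = (C * X).trace + c * (C * W).trace := by
  rw [Matrix.mul_add, trace_add, Matrix.mul_smul, trace_smul, smul_eq_mul]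

lemma add_smul_mem_J0 {B X W : Matrix (Fin n) (Fin n) ℝ} (hX : X ∈ Jm B) (hW : W ∈ Jp B)
    (hBW : 0 < (B * W).trace) :
    X + (-(B * X).trace / (B * W).trace) • W ∈ J0 B := by
  refine ⟨hX.1.add (hW.1.smul (div_nonneg (neg_nonneg.2 hX.2) hW.2)), ?_⟩
  rw [trace_mul_add_smul, div_mul_cancel₀ _ hBW.ne']
  ring

lemma Jm_subset_Jp_of_J0_subset {A B : Matrix (Fin n) (Fin n) ℝ} (hJ0 : J0 B ⊆ Jp A)
    (hJp : ¬ Jp B ⊆ Jp A) : Jm B ⊆ Jp A := by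
  obtain ⟨W, hWB, hWA⟩ := Set.not_subset.1 hJp
  have hAW : (A * W).trace < 0 := not_le.1 fun h => hWA ⟨hWB.1, h⟩
  have hBW : 0 < (B * W).trace :=
    hWB.2.lt_of_ne fun h => hAW.not_ge (hJ0 ⟨hWB.1, h.symm⟩).2
  intro X hX
  refine ⟨hX.1, not_lt.1 fun hAX => ?_⟩
  have hBX : (B * X).trace < 0 := hX.2.lt_of_ne fun h => hAX.not_ge (hJ0 ⟨hX.1, h⟩).2
  have hc : 0 < -(B * X).trace / (B * W).trace := div_pos (neg_pos.2 hBX) hBW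
  have hV := (hJ0 (add_smul_mem_J0 hX hWB hBW)).2
  rw [trace_mul_add_smul] at hV
  linarith [mul_neg_of_pos_of_neg hc hAW]

lemma JpFam_eq_J0 {𝓑 : Set (Matrix (Fin n) (Fin n) ℝ)} {B₀ : Matrix (Fin n) (Fin n) ℝ}
    (hcondB : ∀ B ∈ 𝓑, B ≠ B₀ → J0 B₀ ⊆ Jp B)
    (hB₀ : ∀ X ∈ JpFam 𝓑, (B₀ * X).trace = 0) : JpFam 𝓑 = J0 B₀ := by
  ext X
  refine ⟨fun hX => ⟨hX.1, hB₀ X hX⟩, fun hX => ⟨hX.1, fun B hB => ?_⟩⟩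
  rcases eq_or_ne B B₀ with rfl | hne
  · exact hX.2.ge
  · exact (hcondB B hB hne hX).2

end

theorem stmt10_general {n : ℕ} (𝓑 : Set (Matrix (Fin n) (Fin n) ℝ))
    (hcondB : ∀ A ∈ 𝓑, ∀ B ∈ 𝓑, A ≠ B → J0 B ⊆ Jp A)
    (hA5 : ∀ A ∈ 𝓑, ∀ B ∈ 𝓑, A ≠ B → ¬ (Jp B ⊆ Jp A)) :
    (∃ B₀ ∈ 𝓑, (∀ X ∈ JpFam 𝓑, (B₀ * X).trace = 0) ∧ JpFam 𝓑 = J0 B₀) ∨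
    ({B ∈ 𝓑 | ∀ X ∈ JpFam 𝓑, (B * X).trace = 0} = ∅ ∧
      ∀ A ∈ 𝓑, ∀ B ∈ 𝓑, A ≠ B → Jm B ⊂ Jp A) := by
  by_cases h : ∃ B₀ ∈ 𝓑, ∀ X ∈ JpFam 𝓑, (B₀ * X).trace = 0
  · obtain ⟨B₀, hB₀𝓑, hB₀⟩ := h
    exact .inl ⟨B₀, hB₀𝓑, hB₀, JpFam_eq_J0 (fun B hB hne => hcondB B hB B₀ hB₀𝓑 hne) hB₀⟩
  push Not at h
  refine .inr ⟨Set.eq_empty_of_forall_notMem fun B ⟨hB, hB0⟩ => ?_, fun A hA B hB hAB => ?_⟩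
  · obtain ⟨X, hX, hne⟩ := h B hB
    exact hne (hB0 X hX)
  refine ⟨Jm_subset_Jp_of_J0_subset (hcondB A hA B hB hAB) (hA5 A hA B hB hAB), fun hsub => ?_⟩
  obtain ⟨Y, hY, hne⟩ := h B hB
  have hBY : 0 < (B * Y).trace := (hY.2 B hB).lt_of_ne hne.symm
  exact hBY.not_ge (hsub ⟨hY.1, hY.2 A hA⟩).2

theorem stmt10 {n : ℕ} (𝓑 : Set (Matrix (Fin n) (Fin n) ℝ))
    (hsymm : ∀ B ∈ 𝓑, B.IsSymm)
    (hcondB : ∀ A ∈ 𝓑, ∀ B ∈ 𝓑, A ≠ B → J0 B ⊆ Jp A)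
    (hA5 : ∀ A ∈ 𝓑, ∀ B ∈ 𝓑, A ≠ B → ¬ (Jp B ⊆ Jp A)) :
    (∃ B₀ ∈ 𝓑, (∀ X ∈ JpFam 𝓑, (B₀ * X).trace = 0) ∧ JpFam 𝓑 = J0 B₀) ∨
    ({B ∈ 𝓑 | ∀ X ∈ JpFam 𝓑, (B * X).trace = 0} = ∅ ∧
      ∀ A ∈ 𝓑, ∀ B ∈ 𝓑, A ≠ B → Jm B ⊂ Jp A) :=
  stmt10_general 𝓑 hcondB hA5
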